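/- arXiv:1712.09034 — 6 statements merged into one kernel-verified Lean document; each statement's English description precedes it below -/
import Mathlib

section
/- If H and H' are ordered graphs each containing a monotone path on three vertices, then no ordered forest F satisfies F → (H, H'); that is, for every ordered forest F there exists a red/blue coloring of E(F) with no red order-preserving copy of H and no blue order-preserving copy of H'. -/
/-- An order-preserving copy of the ordered graph `H` in the ordered graph `F`. -/
def OrdCopy {m n : ℕ} (H : SimpleGraph (Fin m)) (F : SimpleGraph (Fin n))
    (f : Fin m → Fin n) : Prop :=
  StrictMono f ∧ ∀ u v, H.Adj u v → F.Adj (f u) (f v)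

/-- `F → (H, H')`: every red/blue coloring (`true` = red, `false` = blue) of the edges of `F`
contains a red ordered copy of `H` or a blue ordered copy of `H'`. -/
def OrdArrows {m m' n : ℕ} (F : SimpleGraph (Fin n))
    (H : SimpleGraph (Fin m)) (H' : SimpleGraph (Fin m')) : Prop :=
  ∀ c : Sym2 (Fin n) → Bool,
    (∃ f, OrdCopy H F f ∧ ∀ u v, H.Adj u v → c s(f u, f v) = true) ∨
    (∃ g, OrdCopy H' F g ∧ ∀ u v, H'.Adj u v → c s(g u, g v) = false)

/-
A forest is bipartite. Colour each edge `uv` of `F` with `u < v` by the side of the bipartition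
containing `v`. In a monotone path `x < y < z` the edges `xy` and `yz` then get the colours of the
adjacent vertices `y` and `z`, which differ; so there is no monochromatic monotone path on three
vertices, and hence no monochromatic ordered copy of any graph containing one.
-/

section

variable {V α : Type*} [LinearOrder V]

def upperEndpointColoring (b : V → α) : Sym2 V → α :=
  Sym2.lift ⟨fun u v => b (max u v), fun u v => congrArg b (max_comm u v)⟩

lemma upperEndpointColoring_mk_of_lt (b : V → α) {u v : V} (h : u < v) :
    upperEndpointColoring b s(u, v) = b v := by
  simp [upperEndpointColoring, max_eq_right h.le]

def NoMonochromaticMonotoneP3 (G : SimpleGraph V) (c : Sym2 V → α) : Prop :=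
  ∀ x y z, x < y → y < z → G.Adj x y → G.Adj y z → c s(x, y) ≠ c s(y, z)

lemma noMonochromaticMonotoneP3_upperEndpointColoring {G : SimpleGraph V} (C : G.Coloring α) :
    NoMonochromaticMonotoneP3 G (upperEndpointColoring C) := by
  intro x y z hxy hyz _ hyz'
  rw [upperEndpointColoring_mk_of_lt _ hxy, upperEndpointColoring_mk_of_lt _ hyz]
  exact C.valid hyz'

end

lemma NoMonochromaticMonotoneP3.not_monochromatic_ordCopy {α : Type*} {m n : ℕ}
    {H : SimpleGraph (Fin m)} {F : SimpleGraph (Fin n)} {c : Sym2 (Fin n) → α}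
    (hc : NoMonochromaticMonotoneP3 F c)
    (hH : ∃ x y z : Fin m, x < y ∧ y < z ∧ H.Adj x y ∧ H.Adj y z)
    {f : Fin m → Fin n} (hf : OrdCopy H F f) {col : α} :
    ¬ ∀ u v, H.Adj u v → c s(f u, f v) = col := by
  intro hcol
  obtain ⟨x, y, z, hxy, hyz, hHxy, hHyz⟩ := hH
  exact hc _ _ _ (hf.1 hxy) (hf.1 hyz) (hf.2 _ _ hHxy) (hf.2 _ _ hHyz)
    ((hcol _ _ hHxy).trans (hcol _ _ hHyz).symm)

/-- If `H` and `H'` each contain a monotone path on three vertices, then no ordered forest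
is an ordered Ramsey graph of `(H, H')`. -/
theorem stmt3 {m m' : ℕ} (H : SimpleGraph (Fin m)) (H' : SimpleGraph (Fin m'))
    (hH : ∃ x y z : Fin m, x < y ∧ y < z ∧ H.Adj x y ∧ H.Adj y z)
    (hH' : ∃ x y z : Fin m', x < y ∧ y < z ∧ H'.Adj x y ∧ H'.Adj y z) :
    ∀ (n : ℕ) (F : SimpleGraph (Fin n)), F.IsAcyclic → ¬ OrdArrows F H H' := by
  intro n F hF harrows
  let C : F.Coloring Bool := F.recolorOfEquiv finTwoEquiv hF.coloringTwo
  have hC := noMonochromaticMonotoneP3_upperEndpointColoring C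
  rcases harrows (upperEndpointColoring C) with ⟨f, hf, hred⟩ | ⟨g, hg, hblue⟩
  · exact hC.not_monochromatic_ordCopy hH hf hred
  · exact hC.not_monochromatic_ordCopy hH' hg hblue
end

section
/- If one of two ordered graphs H, H' contains a vertex with at least two neighbors strictly to its right and the other contains a vertex with at least two neighbors strictly to its left, then no ordered pseudoforest is an ordered Ramsey graph of (H, H'). -/
/-- A pseudoforest: every subgraph `G'` satisfies `|E(G')| ≤ |V(G')|`. -/
def IsPseudoforest {n : ℕ} (F : SimpleGraph (Fin n)) : Prop :=
  ∀ (s : Finset (Fin n)) (E : Set (Sym2 (Fin n))),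
    E ⊆ {e ∈ F.edgeSet | ∀ v ∈ e, v ∈ s} → E.ncard ≤ s.card

def HasRightFork {k : ℕ} (G : SimpleGraph (Fin k)) : Prop :=
  ∃ v a b : Fin k, a ≠ b ∧ v < a ∧ v < b ∧ G.Adj v a ∧ G.Adj v b

def HasLeftFork {k : ℕ} (G : SimpleGraph (Fin k)) : Prop :=
  ∃ v a b : Fin k, a ≠ b ∧ a < v ∧ b < v ∧ G.Adj v a ∧ G.Adj v b

variable {n : ℕ} {F : SimpleGraph (Fin n)}

theorem IsPseudoforest.exists_injOn_head (hF : IsPseudoforest F) :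
    ∃ head : Sym2 (Fin n) → Fin n, (∀ e ∈ F.edgeSet, head e ∈ e) ∧ Set.InjOn head F.edgeSet := by
  classical
  let ends : F.edgeSet → Finset (Fin n) := fun e => (e : Sym2 (Fin n)).toFinset
  have hall : ∀ s : Finset F.edgeSet, s.card ≤ (s.biUnion ends).card := by
    intro s
    have hspan : Subtype.val '' (s : Set F.edgeSet) ⊆
        {e ∈ F.edgeSet | ∀ v ∈ e, v ∈ s.biUnion ends} := by
      rintro _ ⟨e, hes, rfl⟩
      exact ⟨e.2, fun v hv => Finset.mem_biUnion.mpr ⟨e, hes, Sym2.mem_toFinset.mpr hv⟩⟩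
    simpa [Set.ncard_image_of_injective _ Subtype.val_injective] using hF _ _ hspan
  obtain ⟨f, hf_inj, hf_mem⟩ := (Finset.all_card_le_biUnion_card_iff_exists_injective ends).mp hall
  refine ⟨fun e => if he : e ∈ F.edgeSet then f ⟨e, he⟩ else e.out.1, ?_, ?_⟩
  · intro e he
    simpa [he] using Sym2.mem_toFinset.mp (hf_mem ⟨e, he⟩)
  · intro e₁ he₁ e₂ he₂ heq
    simp only [he₁, he₂, dif_pos] at heq
    exact congrArg Subtype.val (hf_inj heq)

def headColoring (head : Sym2 (Fin n) → Fin n) (e : Sym2 (Fin n)) : Bool :=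
  decide (head e = e.inf)

section Forks

variable {head : Sym2 (Fin n) → Fin n} {x y : Fin n}

theorem head_eq_left_of_headColoring_eq_true (hxy : x < y)
    (h : headColoring head s(x, y) = true) : head s(x, y) = x := by
  simpa [headColoring, hxy.le] using h

theorem head_eq_right_of_headColoring_eq_false (hxy : x < y) (hmem : head s(x, y) ∈ s(x, y))
    (h : headColoring head s(x, y) = false) : head s(x, y) = y := by
  have hne : head s(x, y) ≠ x := by simpa [headColoring, hxy.le] using h
  simpa [hne] using hmem

variable {k : ℕ} {G : SimpleGraph (Fin k)} {g : Fin k → Fin n}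

theorem not_forall_headColoring_eq_true_of_hasRightFork (hinj : Set.InjOn head F.edgeSet)
    (hG : HasRightFork G) (hg : OrdCopy G F g) :
    ¬ ∀ u w, G.Adj u w → headColoring head s(g u, g w) = true := by
  intro hred
  obtain ⟨v, a, b, hab, hva, hvb, hGa, hGb⟩ := hG
  have hhead : ∀ w, v < w → G.Adj v w → head s(g v, g w) = g v := fun w hvw hGw =>
    head_eq_left_of_headColoring_eq_true (hg.1 hvw) (hred v w hGw)
  have hedge : s(g v, g a) = s(g v, g b) :=
    hinj (hg.2 v a hGa) (hg.2 v b hGb) ((hhead a hva hGa).trans (hhead b hvb hGb).symm)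
  exact hab (hg.1.injective (Sym2.congr_right.mp hedge))

theorem not_forall_headColoring_eq_false_of_hasLeftFork
    (hmem : ∀ e ∈ F.edgeSet, head e ∈ e) (hinj : Set.InjOn head F.edgeSet)
    (hG : HasLeftFork G) (hg : OrdCopy G F g) :
    ¬ ∀ u w, G.Adj u w → headColoring head s(g u, g w) = false := by
  intro hblue
  obtain ⟨v, a, b, hab, hav, hbv, hGa, hGb⟩ := hG
  have hhead : ∀ w, w < v → G.Adj v w → head s(g w, g v) = g v := fun w hwv hGw =>
    have hFw : s(g w, g v) ∈ F.edgeSet := (hg.2 v w hGw).symm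
    head_eq_right_of_headColoring_eq_false (hg.1 hwv) (hmem _ hFw)
      (Sym2.eq_swap ▸ hblue v w hGw)
  have hedge : s(g a, g v) = s(g b, g v) :=
    hinj (hg.2 v a hGa).symm (hg.2 v b hGb).symm
      ((hhead a hav hGa).trans (hhead b hbv hGb).symm)
  exact hab (hg.1.injective (Sym2.congr_left.mp hedge))

end Forks

/-- If one of `H, H'` has a vertex with two neighbors strictly to its right and the other
has a vertex with two neighbors strictly to its left, no ordered pseudoforest is an
ordered Ramsey graph of `(H, H')`. -/
theorem stmt4 {m m' : ℕ} (H : SimpleGraph (Fin m)) (H' : SimpleGraph (Fin m'))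
    (h : ((∃ v a b : Fin m, a ≠ b ∧ v < a ∧ v < b ∧ H.Adj v a ∧ H.Adj v b) ∧
          (∃ v a b : Fin m', a ≠ b ∧ a < v ∧ b < v ∧ H'.Adj v a ∧ H'.Adj v b)) ∨
         ((∃ v a b : Fin m', a ≠ b ∧ v < a ∧ v < b ∧ H'.Adj v a ∧ H'.Adj v b) ∧
          (∃ v a b : Fin m, a ≠ b ∧ a < v ∧ b < v ∧ H.Adj v a ∧ H.Adj v b))) :
    ∀ (n : ℕ) (F : SimpleGraph (Fin n)), IsPseudoforest F → ¬ OrdArrows F H H' := by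
  intro n F hF harrows
  obtain ⟨head, hmem, hinj⟩ := hF.exists_injOn_head
  rcases h with ⟨hH, hH'⟩ | ⟨hH', hH⟩
  · rcases harrows (headColoring head) with ⟨f, hf, hred⟩ | ⟨g, hg, hblue⟩
    · exact not_forall_headColoring_eq_true_of_hasRightFork hinj hH hf hred
    · exact not_forall_headColoring_eq_false_of_hasLeftFork hmem hinj hH' hg hblue
  · rcases harrows (fun e => !headColoring head e) with ⟨f, hf, hred⟩ | ⟨g, hg, hblue⟩
    · exact not_forall_headColoring_eq_false_of_hasLeftFork hmem hinj hH hf (by simpa using hred)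
    · exact not_forall_headColoring_eq_true_of_hasRightFork hinj hH' hg (by simpa using hblue)
end

section
/- Let H be an ordered graph, σ the least n such that the complete ordered graph on n vertices arrows H in any 3-coloring (i.e., σ = r<(H,H,H)), ε = σ^(−σ)/4, δ = |E(H)|·σ^(−σ)/2, and n ≥ σ. If E1, E2 ⊆ E(K_n) each induce at most ε·n^{|V(H)|} order-preserving copies of H, then |E1 ∪ E2| ≤ (1 − δ)·C(n,2). -/
/-!
Colour the edges of `K_n` by membership in `E₁`, in `E₂ \ E₁`, or in neither. Every σ-subset of
`[n]` spans a monochromatic copy of `H`, and a copy lies in at most `C(n-t, σ-t)` σ-subsets, so there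
are at least `C(n,σ) / C(n-t,σ-t) = C(n,t) / C(σ,t) ≥ n^t / σ^σ` monochromatic copies. At most half
of them lie in `E₁` or `E₂`, so `n^t / (2σ^σ)` copies have all their `|E(H)|` edges in
`E₃ = E(K_n) \ (E₁ ∪ E₂)`. An edge lies in at most `n^(t-2)` copies, hence
`|E₃| ≥ |E(H)| n² / (2σ^σ) ≥ δ·C(n,2)`.
-/

open Finset

namespace Nat

theorem pow_mul_descFactorial_le_pow_mul_descFactorial {m n : ℕ} (h : m ≤ n) (k : ℕ) :
    n ^ k * m.descFactorial k ≤ m ^ k * n.descFactorial k := by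
  induction k with
  | zero => simp
  | succ k ih =>
    have step : n * (m - k) ≤ m * (n - k) := by
      rcases le_total k m with hk | hk
      · zify [hk, hk.trans h]
        nlinarith
      · simp [Nat.sub_eq_zero_of_le hk]
    calc n ^ (k + 1) * m.descFactorial (k + 1)
        = n * (m - k) * (n ^ k * m.descFactorial k) := by rw [descFactorial_succ, pow_succ]; ring
      _ ≤ m * (n - k) * (m ^ k * n.descFactorial k) := Nat.mul_le_mul step ih
      _ = m ^ (k + 1) * n.descFactorial (k + 1) := by rw [descFactorial_succ, pow_succ]; ring

theorem pow_mul_choose_le_pow_mul_choose {m n : ℕ} (h : m ≤ n) (k : ℕ) :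
    n ^ k * m.choose k ≤ m ^ k * n.choose k := by
  have := pow_mul_descFactorial_le_pow_mul_descFactorial h k
  rw [descFactorial_eq_factorial_mul_choose, descFactorial_eq_factorial_mul_choose] at this
  refine Nat.le_of_mul_le_mul_left ?_ k.factorial_pos
  linarith

end Nat

namespace Fin

theorem card_filter_strictMono (k n : ℕ) :
    #{g : Fin k → Fin n | StrictMono g} = n.choose k := by
  let e : {g : Fin k → Fin n // StrictMono g} ≃ (Fin k ↪o Fin n) :=
    { toFun g := OrderEmbedding.ofStrictMono g.1 g.2
      invFun f := ⟨f, f.strictMono⟩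
      left_inv _ := rfl
      right_inv _ := rfl }
  rw [← Fintype.card_subtype, ← Nat.card_eq_fintype_card,
    Nat.card_congr (e.trans Set.powersetCard.ofFinEmbEquiv), Set.powersetCard.card, Nat.card_fin]

theorem card_filter_strictMono_superset_le {k n : ℕ} (T : Finset (Fin n)) :
    #{g : Fin k → Fin n | StrictMono g ∧ T ⊆ univ.image g} ≤ (n - #T).choose (k - #T) := by
  calc _ ≤ #(powersetCard (k - #T) Tᶜ) := by
        refine card_le_card_of_injOn (fun g => univ.image g \ T) (fun g hg => ?_) ?_
        · simp only [coe_filter, mem_univ, true_and, Set.mem_ofPred_eq] at hg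
          rw [mem_coe, mem_powersetCard, card_sdiff_of_subset hg.2,
            card_image_of_injective _ hg.1.injective, card_univ, Fintype.card_fin]
          exact ⟨fun x hx => mem_compl.2 (mem_sdiff.1 hx).2, rfl⟩
        · intro g₁ hg₁ g₂ hg₂ h
          simp only [coe_filter, mem_univ, true_and, Set.mem_ofPred_eq] at hg₁ hg₂
          have himage : univ.image g₁ = univ.image g₂ := by
            rw [← sdiff_union_of_subset hg₁.2, ← sdiff_union_of_subset hg₂.2]
            exact congrArg (· ∪ T) h
          rw [← hg₁.1.range_inj hg₂.1, ← Fintype.coe_image_univ, ← Fintype.coe_image_univ, himage]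
    _ = _ := by rw [card_powersetCard, card_compl, Fintype.card_fin]

end Fin

namespace SimpleGraph

variable {t n : ℕ} (H : SimpleGraph (Fin t))

def OrderedArrows (κ : Type*) (N : ℕ) : Prop :=
  ∀ c : Sym2 (Fin N) → κ, ∃ f : Fin t → Fin N, StrictMono f ∧
    ∃ k, ∀ u v, H.Adj u v → c s(f u, f v) = k

theorem OrderedArrows.le {κ : Type*} [Nonempty κ] {N : ℕ} (h : H.OrderedArrows κ N) : t ≤ N := by
  obtain ⟨f, hf, -⟩ := h fun _ => Classical.arbitrary κ
  simpa using Fintype.card_le_of_injective f hf.injective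

open Classical in
noncomputable def orderedCopies (E : Finset (Sym2 (Fin n))) : Finset (Fin t → Fin n) :=
  {f | StrictMono f ∧ ∀ u v, H.Adj u v → s(f u, f v) ∈ E}

open Classical in
noncomputable def monochromaticCopies {κ : Type*} (c : Sym2 (Fin n) → κ) :
    Finset (Fin t → Fin n) :=
  {f | StrictMono f ∧ ∃ k, ∀ u v, H.Adj u v → c s(f u, f v) = k}

theorem card_orderedCopies (E : Finset (Sym2 (Fin n))) :
    #(H.orderedCopies E) =
      Nat.card {f : Fin t → Fin n // StrictMono f ∧ ∀ u v, H.Adj u v → s(f u, f v) ∈ E} := by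
  classical
  rw [Nat.card_eq_fintype_card, ← Fintype.card_coe]
  exact Fintype.card_congr (Equiv.subtypeEquivRight fun f => by simp [orderedCopies])

@[gcongr]
theorem orderedCopies_mono {E E' : Finset (Sym2 (Fin n))} (h : E ⊆ E') :
    H.orderedCopies E ⊆ H.orderedCopies E' := by
  intro f hf
  simp only [orderedCopies, mem_filter, mem_univ, true_and] at hf ⊢
  exact ⟨hf.1, fun u v huv => h (hf.2 u v huv)⟩

theorem card_monochromaticCopies_le_sum {κ : Type*} [Fintype κ] [DecidableEq κ]
    (c : Sym2 (Fin n) → κ) :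
    #(H.monochromaticCopies c) ≤
      ∑ k, #(H.orderedCopies {e ∈ (⊤ : SimpleGraph (Fin n)).edgeFinset | c e = k}) := by
  refine (card_le_card fun f hf => ?_).trans card_biUnion_le
  simp only [monochromaticCopies, orderedCopies, mem_filter, mem_univ, true_and, mem_biUnion,
    mem_edgeFinset, edgeSet_top] at hf ⊢
  obtain ⟨hf, k, hk⟩ := hf
  refine ⟨k, hf, fun u v huv => ⟨?_, hk u v huv⟩⟩
  simpa using hf.injective.ne huv.ne

theorem choose_le_card_monochromaticCopies_mul {κ : Type*} {σ : ℕ} (hσ : H.OrderedArrows κ σ)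
    (c : Sym2 (Fin n) → κ) :
    n.choose σ ≤ #(H.monochromaticCopies c) * (n - t).choose (σ - t) := by
  classical
  choose F hF k hk using hσ
  rw [← Fin.card_filter_strictMono, mul_comm]
  refine card_le_mul_card_image_of_maps_to (f := fun g => g ∘ F (c ∘ Sym2.map g)) (fun g hg => ?_)
    _ (fun h hh => ?_)
  · simp only [mem_filter, mem_univ, true_and] at hg
    simp only [monochromaticCopies, mem_filter, mem_univ, true_and]
    exact ⟨hg.comp (hF _), k (c ∘ Sym2.map g), fun u v huv => by
      simpa using hk (c ∘ Sym2.map g) u v huv⟩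
  · simp only [monochromaticCopies, mem_filter, mem_univ, true_and] at hh
    have hcard : #(univ.image h) = t := by
      rw [card_image_of_injective _ hh.1.injective, card_univ, Fintype.card_fin]
    have hfibre := Fin.card_filter_strictMono_superset_le (k := σ) (univ.image h)
    rw [hcard] at hfibre
    refine le_trans (card_le_card fun g hg => ?_) hfibre
    simp only [mem_filter, mem_univ, true_and] at hg ⊢
    refine ⟨hg.1, ?_⟩
    rw [← hg.2, ← image_image]
    exact image_subset_image (subset_univ _)

theorem pow_le_mul_card_monochromaticCopies {κ : Type*} [Nonempty κ] {σ : ℕ}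
    (hσ : H.OrderedArrows κ σ) (hn : σ ≤ n) (c : Sym2 (Fin n) → κ) :
    n ^ t ≤ σ ^ σ * #(H.monochromaticCopies c) := by
  have htσ := hσ.le
  set M := #(H.monochromaticCopies c)
  have hcount : n.choose t ≤ M * σ.choose t := by
    refine Nat.le_of_mul_le_mul_right ?_ (Nat.choose_pos (Nat.sub_le_sub_right hn t))
    calc n.choose t * (n - t).choose (σ - t) = n.choose σ * σ.choose t := (Nat.choose_mul htσ).symm
      _ ≤ M * (n - t).choose (σ - t) * σ.choose t :=
        Nat.mul_le_mul_right _ (H.choose_le_card_monochromaticCopies_mul hσ c)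
      _ = M * σ.choose t * (n - t).choose (σ - t) := by ring
  have hpow : σ ^ t ≤ σ ^ σ := by
    rcases Nat.eq_zero_or_pos σ with rfl | hσ0
    · simp [Nat.le_zero.1 htσ]
    · exact Nat.pow_le_pow_right hσ0 htσ
  refine Nat.le_of_mul_le_mul_right ?_ (Nat.choose_pos htσ)
  calc n ^ t * σ.choose t ≤ σ ^ t * n.choose t := Nat.pow_mul_choose_le_pow_mul_choose hn t
    _ ≤ σ ^ σ * (M * σ.choose t) := Nat.mul_le_mul hpow hcount
    _ = σ ^ σ * M * σ.choose t := by ring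

theorem card_orderedCopies_mul_ncard_edgeSet_le {E : Finset (Sym2 (Fin n))}
    (hE : ∀ e ∈ E, ¬ e.IsDiag) :
    #(H.orderedCopies E) * H.edgeSet.ncard ≤ #E * n ^ (t - 2) := by
  classical
  refine card_mul_le_card_mul (fun f e => ∃ u v, H.Adj u v ∧ s(f u, f v) = e)
    (fun f hf => ?_) (fun e he => ?_)
  · simp only [orderedCopies, mem_filter, mem_univ, true_and] at hf
    rw [← Set.ncard_coe_finset]
    refine Set.ncard_le_ncard_of_injOn (Sym2.map f) (fun d hd => ?_)
      (Sym2.map.injective hf.1.injective).injOn (finite_toSet _)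
    induction d using Sym2.ind with
    | _ u v => exact mem_coe.2 ((mem_bipartiteAbove _).2 ⟨hf.2 u v hd, u, v, hd, rfl⟩)
  · induction e using Sym2.ind with
    | _ a b =>
    have hab : a ≠ b := by simpa using hE _ he
    calc #(bipartiteBelow _ _ s(a, b))
        ≤ #{g : Fin t → Fin n | StrictMono g ∧ {a, b} ⊆ univ.image g} := by
          refine card_le_card fun f hf => ?_
          simp only [orderedCopies, mem_bipartiteBelow, mem_filter, mem_univ, true_and] at hf ⊢
          obtain ⟨⟨hf, -⟩, u, v, -, huv⟩ := hf
          refine ⟨hf, ?_⟩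
          rcases Sym2.eq_iff.1 huv with ⟨rfl, rfl⟩ | ⟨rfl, rfl⟩ <;> simp [insert_subset_iff]
      _ ≤ (n - 2).choose (t - 2) := by
          simpa [card_pair hab] using Fin.card_filter_strictMono_superset_le (k := t) {a, b}
      _ ≤ n ^ (t - 2) := (Nat.choose_le_pow _ _).trans (Nat.pow_le_pow_left (Nat.sub_le n 2) _)

theorem card_orderedCopies_mul_ncard_edgeSet_mul_sq_le {E : Finset (Sym2 (Fin n))}
    (hE : ∀ e ∈ E, ¬ e.IsDiag) :
    #(H.orderedCopies E) * H.edgeSet.ncard * n ^ 2 ≤ #E * n ^ t := by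
  rcases H.edgeSet.eq_empty_or_nonempty with h | ⟨e, he⟩
  · simp [h]
  · have ht : 2 ≤ t := by
      induction e using Sym2.ind with
      | _ u v => have := Fin.val_ne_of_ne (H.ne_of_adj he); omega
    calc _ ≤ #E * n ^ (t - 2) * n ^ 2 :=
          Nat.mul_le_mul_right _ (H.card_orderedCopies_mul_ncard_edgeSet_le hE)
      _ = #E * n ^ t := by rw [mul_assoc, ← pow_add, Nat.sub_add_cancel ht]

theorem card_add_card_edgeFinset_top_sdiff {V : Type*} [Fintype V] [DecidableEq V]
    {E : Finset (Sym2 V)} (hE : ∀ e ∈ E, ¬ e.IsDiag) :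
    #E + #((⊤ : SimpleGraph V).edgeFinset \ E) = (Fintype.card V).choose 2 := by
  have hsub : E ⊆ (⊤ : SimpleGraph V).edgeFinset := fun e he => by simpa using hE e he
  rw [add_comm, card_sdiff_add_card_eq_card hsub, card_edgeFinset_top_eq_card_choose_two]

theorem pow_le_mul_sum_card_orderedCopies {σ : ℕ} (hσ : H.OrderedArrows (Fin 3) σ) (hn : σ ≤ n)
    (E1 E2 : Finset (Sym2 (Fin n))) :
    n ^ t ≤ σ ^ σ * (#(H.orderedCopies E1) + #(H.orderedCopies E2) +
      #(H.orderedCopies ((⊤ : SimpleGraph (Fin n)).edgeFinset \ (E1 ∪ E2)))) := by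
  classical
  let c : Sym2 (Fin n) → Fin 3 := fun e => if e ∈ E1 then 0 else if e ∈ E2 then 1 else 2
  refine (H.pow_le_mul_card_monochromaticCopies hσ hn c).trans (Nat.mul_le_mul_left _ ?_)
  refine (H.card_monochromaticCopies_le_sum c).trans ?_
  rw [Fin.sum_univ_three]
  gcongr <;> intro e he <;> simp only [mem_filter, c] at he <;> split_ifs at he <;> simp_all

theorem ncard_edgeSet_mul_sq_le_card_sdiff {σ : ℕ} (hσ : H.OrderedArrows (Fin 3) σ) (hn : σ ≤ n)
    {E1 E2 : Finset (Sym2 (Fin n))}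
    (h1 : (#(H.orderedCopies E1) : ℝ) ≤ ((σ : ℝ) ^ σ)⁻¹ / 4 * n ^ t)
    (h2 : (#(H.orderedCopies E2) : ℝ) ≤ ((σ : ℝ) ^ σ)⁻¹ / 4 * n ^ t) :
    (H.edgeSet.ncard : ℝ) * n ^ 2 ≤
      2 * σ ^ σ * #((⊤ : SimpleGraph (Fin n)).edgeFinset \ (E1 ∪ E2)) := by
  set E3 := (⊤ : SimpleGraph (Fin n)).edgeFinset \ (E1 ∪ E2)
  have hcount : (n : ℝ) ^ t ≤ σ ^ σ *
      (#(H.orderedCopies E1) + #(H.orderedCopies E2) + #(H.orderedCopies E3)) := by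
    exact_mod_cast H.pow_le_mul_sum_card_orderedCopies hσ hn E1 E2
  have hE3 : (#(H.orderedCopies E3) * H.edgeSet.ncard * n ^ 2 : ℝ) ≤ #E3 * n ^ t := by
    refine mod_cast H.card_orderedCopies_mul_ncard_edgeSet_mul_sq_le fun e he => ?_
    exact not_isDiag_of_mem_edgeSet _ (mem_edgeFinset.1 (mem_sdiff.1 he).1)
  have ha : (0 : ℝ) < σ ^ σ := by exact_mod_cast Nat.pow_pos_iff.2 (by omega)
  have hP : (0 : ℝ) < n ^ t := by exact_mod_cast Nat.pow_pos_iff.2 (by have := hσ.le; omega)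
  have hcopies3 : (n : ℝ) ^ t / 2 ≤ σ ^ σ * #(H.orderedCopies E3) := by
    have : (σ : ℝ) ^ σ * (((σ : ℝ) ^ σ)⁻¹ / 4 * n ^ t) = n ^ t / 4 := by field_simp
    nlinarith
  refine le_of_mul_le_mul_right ?_ hP
  nlinarith [mul_le_mul_of_nonneg_left hcopies3 (by positivity : (0 : ℝ) ≤ H.edgeSet.ncard * n ^ 2),
    mul_le_mul_of_nonneg_left hE3 ha.le]

end SimpleGraph

/-- Counting lemma: let `H` be an ordered graph on `t` vertices, `σ = r₍(H,H,H)` the least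
`N` such that the complete ordered graph on `N` vertices arrows `H` in any 3-coloring,
`ε = σ^(-σ)/4` and `δ = |E(H)|·σ^(-σ)/2`, and `n ≥ σ`. If `E₁, E₂ ⊆ E(Kₙ)` each induce at
most `ε·n^t` order-preserving copies of `H`, then `|E₁ ∪ E₂| ≤ (1 - δ)·C(n,2)`. -/
theorem stmt9 {t : ℕ} (H : SimpleGraph (Fin t)) (σ n : ℕ)
    (hσ : IsLeast {N : ℕ | ∀ c : Sym2 (Fin N) → Fin 3,
        ∃ f : Fin t → Fin N, StrictMono f ∧
          ∃ k : Fin 3, ∀ u v, H.Adj u v → c s(f u, f v) = k} σ)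
    (hn : σ ≤ n)
    (E1 E2 : Finset (Sym2 (Fin n)))
    (hE1 : ∀ e ∈ E1, ¬ e.IsDiag) (hE2 : ∀ e ∈ E2, ¬ e.IsDiag)
    (h1 : (Nat.card {f : Fin t → Fin n // StrictMono f ∧
        ∀ u v, H.Adj u v → s(f u, f v) ∈ E1} : ℝ) ≤ ((σ : ℝ) ^ σ)⁻¹ / 4 * n ^ t)
    (h2 : (Nat.card {f : Fin t → Fin n // StrictMono f ∧
        ∀ u v, H.Adj u v → s(f u, f v) ∈ E2} : ℝ) ≤ ((σ : ℝ) ^ σ)⁻¹ / 4 * n ^ t) :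
    ((E1 ∪ E2).card : ℝ) ≤
      (1 - (H.edgeSet.ncard : ℝ) * ((σ : ℝ) ^ σ)⁻¹ / 2) * (n.choose 2) := by
  rw [← H.card_orderedCopies] at h1 h2
  have hE3 := H.ncard_edgeSet_mul_sq_le_card_sdiff hσ.1 hn h1 h2
  have hsplit : (#(E1 ∪ E2) + #((⊤ : SimpleGraph (Fin n)).edgeFinset \ (E1 ∪ E2)) : ℝ) =
      n.choose 2 := by
    have := SimpleGraph.card_add_card_edgeFinset_top_sdiff fun e he =>
      (mem_union.1 he).elim (hE1 e) (hE2 e)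
    rw [Fintype.card_fin] at this
    exact_mod_cast this
  have hN : (n.choose 2 : ℝ) ≤ n ^ 2 / 2 := by simpa using Nat.choose_le_pow_div (α := ℝ) 2 n
  have ha : (0 : ℝ) < σ ^ σ := by exact_mod_cast Nat.pow_pos_iff.2 (by omega)
  have hdensity : (H.edgeSet.ncard : ℝ) * n.choose 2 * ((σ : ℝ) ^ σ)⁻¹ ≤
      #((⊤ : SimpleGraph (Fin n)).edgeFinset \ (E1 ∪ E2)) := by
    rw [← div_eq_mul_inv, div_le_iff₀ ha]
    nlinarith
  have : (0 : ℝ) ≤ H.edgeSet.ncard * n.choose 2 * ((σ : ℝ) ^ σ)⁻¹ := by positivity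
  linarith
end

section
/- If H' is a monotone matching (an intervally disjoint union K2 ⊔ ... ⊔ K2 of single edges, each entirely to the left of the next) and H is any ordered graph without isolated vertices, then the pair (H, H') is Ramsey finite: there are only finitely many minimal ordered Ramsey graphs of (H, H') up to order-isomorphism. -/
/-- `F'` is (isomorphic to) an ordered subgraph of `F`. -/
def IsOrdSubgraph {k n : ℕ} (F' : SimpleGraph (Fin k)) (F : SimpleGraph (Fin n)) : Prop :=
  ∃ φ : Fin k → Fin n, StrictMono φ ∧ ∀ u v, F'.Adj u v → F.Adj (φ u) (φ v)

/-- `F` is a minimal ordered Ramsey graph of `(H, H')`: it arrows `(H, H')` and no proper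
ordered subgraph of it does. -/
def MinimalOrdRamsey {m m' n : ℕ} (F : SimpleGraph (Fin n))
    (H : SimpleGraph (Fin m)) (H' : SimpleGraph (Fin m')) : Prop :=
  OrdArrows F H H' ∧ ∀ (k : ℕ) (F' : SimpleGraph (Fin k)),
    IsOrdSubgraph F' F → ¬ IsOrdSubgraph F F' → ¬ OrdArrows F' H H'

/-!
By Gallai's theorem for intervals, a family of intervals contains `k` of them lying one after
the other unless fewer than `k` points pierce it. Hence `F → (H, M_k)`, `M_k` the monotone
matching with `k` edges, iff for every set `P` of fewer than `k` vertices `F` has an ordered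
copy of `H` none of whose edges spans a point of `P`.

This property has a witness of bounded size. Let `a` be the leftmost point of `P`. Since `H`
has no isolated vertices, a copy avoiding `P` splits at a cut of `H` into a left block placed
below `a` and a right part placed above `a` and avoiding the other points of `P`. For each of
the `m + 1` cuts keep a copy of the left block with lowest possible top, and, by induction on
`|P|`, a bounded witness set for the right part at the highest level it allows. The union `U` of
these sets has size bounded in terms of `m` and `k`, and the ordered subgraph of `F` induced on
`U` still arrows `(H, M_k)`; so a minimal Ramsey graph has at most `|U|` vertices.
-/

namespace OrderedRamsey

section Avoidance

variable {α β γ : Type*} [Preorder β] [Preorder γ]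

def AvoidsOn (H : SimpleGraph α) (S : Set α) (P : Finset β) (f : α → β) : Prop :=
  ∀ u ∈ S, ∀ v ∈ S, H.Adj u v → ∀ a ∈ P, a ∉ Set.Icc (f u) (f v)

variable {H : SimpleGraph α} {S S' : Set α} {P Q : Finset β} {f : α → β}

theorem AvoidsOn.mono (h : AvoidsOn H S P f) (hS : S' ⊆ S) (hP : Q ⊆ P) : AvoidsOn H S' Q f :=
  fun u hu v hv huv a ha => h u (hS hu) v (hS hv) huv a (hP ha)

theorem avoidsOn_of_lt (h : ∀ u ∈ S, ∀ a ∈ P, f u < a) : AvoidsOn H S P f :=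
  fun _ _ v hv _ a ha hmem => (h v hv a ha).not_ge hmem.2

theorem AvoidsOn.insert_of_lt [DecidableEq β] {a : β} (h : AvoidsOn H S P f)
    (ha : ∀ u ∈ S, a < f u) : AvoidsOn H S (insert a P) f := by
  intro u hu v hv huv b hb
  rcases Finset.mem_insert.1 hb with rfl | hb
  · exact fun hmem => (ha u hu).not_ge hmem.1
  · exact h u hu v hv huv b hb

theorem AvoidsOn.comap (φ : γ ↪o β) {f : α → γ} {P : Finset γ}
    (h : AvoidsOn H S (P.map φ.toEmbedding) (φ ∘ f)) : AvoidsOn H S P f :=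
  fun u hu v hv huv a ha hmem => h u hu v hv huv (φ a) (Finset.mem_map_of_mem _ ha)
    ⟨φ.le_iff_le.2 hmem.1, φ.le_iff_le.2 hmem.2⟩

end Avoidance

section Embedding

variable {α β γ : Type*} [Preorder α] [Preorder β] [Preorder γ]

def IsEmbeddingOn (H : SimpleGraph α) (F : SimpleGraph β) (S : Set α) (W : Set β)
    (f : α → β) : Prop :=
  Set.MapsTo f S W ∧ StrictMonoOn f S ∧ ∀ u ∈ S, ∀ v ∈ S, H.Adj u v → F.Adj (f u) (f v)

variable {H : SimpleGraph α} {F : SimpleGraph β} {S S' : Set α} {W W' : Set β}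
  {P : Finset β} {f g : α → β}

theorem IsEmbeddingOn.mono (h : IsEmbeddingOn H F S W f) (hS : S' ⊆ S)
    (hW : Set.MapsTo f S' W') : IsEmbeddingOn H F S' W' f :=
  ⟨hW, h.2.1.mono hS, fun u hu v hv huv => h.2.2 u (hS hu) v (hS hv) huv⟩

theorem IsEmbeddingOn.comap (φ : γ ↪o β) {f : α → γ} (h : IsEmbeddingOn H F S W (φ ∘ f)) :
    IsEmbeddingOn H (F.comap φ) S (φ ⁻¹' W) f :=
  ⟨h.1, fun _ hu _ hv huv => φ.lt_iff_lt.1 (h.2.1 hu hv huv), h.2.2⟩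

theorem IsEmbeddingOn.piecewise [DecidablePred (· ∈ S)] (hf : IsEmbeddingOn H F S W f)
    (hg : IsEmbeddingOn H F S' W' g) (hS : ∀ u ∈ S, ∀ v ∈ S', u < v)
    (hW : ∀ a ∈ W, ∀ b ∈ W', a < b) (hcut : ∀ u ∈ S, ∀ v ∈ S', ¬ H.Adj u v) :
    IsEmbeddingOn H F (S ∪ S') (W ∪ W') (S.piecewise f g) := by
  have hg' : ∀ u ∈ S', S.piecewise f g u = g u := fun u hu =>
    Set.piecewise_eq_of_notMem _ _ _ fun hu' => lt_irrefl u (hS u hu' u hu)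
  refine ⟨?_, ?_, ?_⟩
  · rintro u (hu | hu)
    · exact Or.inl (Set.piecewise_eq_of_mem S f g hu ▸ hf.1 hu)
    · exact Or.inr (hg' u hu ▸ hg.1 hu)
  · rintro u (hu | hu) v (hv | hv) huv
    · simpa only [Set.piecewise_eq_of_mem S f g, hu, hv] using hf.2.1 hu hv huv
    · simpa only [Set.piecewise_eq_of_mem S f g hu, hg' v hv] using hW _ (hf.1 hu) _ (hg.1 hv)
    · exact absurd huv (lt_asymm (hS v hv u hu))
    · simpa only [hg' u hu, hg' v hv] using hg.2.1 hu hv huv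
  · rintro u (hu | hu) v (hv | hv) huv
    · simpa only [Set.piecewise_eq_of_mem S f g, hu, hv] using hf.2.2 u hu v hv huv
    · exact absurd huv (hcut u hu v hv)
    · exact absurd huv.symm (hcut v hv u hu)
    · simpa only [hg' u hu, hg' v hv] using hg.2.2 u hu v hv huv

theorem AvoidsOn.piecewise [DecidablePred (· ∈ S)] (hf : AvoidsOn H S P f)
    (hg : AvoidsOn H S' P g) (hS : ∀ u ∈ S, ∀ v ∈ S', u < v)
    (hcut : ∀ u ∈ S, ∀ v ∈ S', ¬ H.Adj u v) : AvoidsOn H (S ∪ S') P (S.piecewise f g) := by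
  have hg' : ∀ u ∈ S', S.piecewise f g u = g u := fun u hu =>
    Set.piecewise_eq_of_notMem _ _ _ fun hu' => lt_irrefl u (hS u hu' u hu)
  rintro u (hu | hu) v (hv | hv) huv
  · simpa only [Set.piecewise_eq_of_mem S f g, hu, hv] using hf u hu v hv huv
  · exact absurd huv (hcut u hu v hv)
  · exact absurd huv.symm (hcut v hv u hu)
  · simpa only [hg' u hu, hg' v hv] using hg u hu v hv huv

end Embedding

/-- Gallai's theorem for intervals `[e.1, e.2]`. -/
theorem exists_chain_or_pierce {β : Type*} [LinearOrder β] (E : Finset (β × β)) (k : ℕ) :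
    (∃ e : Fin k → β × β, (∀ i, e i ∈ E) ∧ ∀ i j, i < j → (e i).2 < (e j).1) ∨
      ∃ P : Finset β, P.card < k ∧ ∀ e ∈ E, ∃ a ∈ P, a ∈ Set.Icc e.1 e.2 := by
  classical
  induction k generalizing E with
  | zero => exact Or.inl ⟨Fin.elim0, fun i => i.elim0, fun i => i.elim0⟩
  | succ k ih =>
    rcases E.eq_empty_or_nonempty with rfl | hE
    · exact Or.inr ⟨∅, by simp, by simp⟩
    -- greedy step: the interval ending first
    obtain ⟨e₀, he₀, hmin⟩ := E.exists_min_image Prod.snd hE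
    rcases ih (E.filter fun e => e₀.2 < e.1) with ⟨e, he, hord⟩ | ⟨P, hP, hpierce⟩
    · refine Or.inl ⟨Fin.cons e₀ e, Fin.cases he₀ fun i => (Finset.mem_filter.1 (he i)).1, ?_⟩
      intro i j hij
      induction j using Fin.cases with
      | zero => exact absurd hij (Fin.not_lt_zero i)
      | succ j =>
        induction i using Fin.cases with
        | zero => simpa using (Finset.mem_filter.1 (he j)).2
        | succ i => simpa using hord i j (Fin.succ_lt_succ_iff.1 hij)
    · refine Or.inr ⟨insert e₀.2 P, (Finset.card_insert_le _ _).trans_lt (by omega), ?_⟩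
      intro e heE
      by_cases h : e₀.2 < e.1
      · obtain ⟨a, ha, hae⟩ := hpierce e (Finset.mem_filter.2 ⟨heE, h⟩)
        exact ⟨a, Finset.mem_insert_of_mem ha, hae⟩
      · exact ⟨e₀.2, Finset.mem_insert_self _ _, not_lt.1 h, hmin e heE⟩

section MonotoneMatching

variable {m n k : ℕ} {H : SimpleGraph (Fin m)} {F : SimpleGraph (Fin n)}
  {M : SimpleGraph (Fin (2 * k))}

theorem exists_strictMono_matching {β : Type*} [LinearOrder β]
    (hM : ∀ a b : Fin (2 * k), M.Adj a b ↔ (a ≠ b ∧ a.val / 2 = b.val / 2))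
    (e : Fin k → β × β) (he : ∀ i, (e i).1 < (e i).2) (hord : ∀ i j, i < j → (e i).2 < (e j).1) :
    ∃ g : Fin (2 * k) → β, StrictMono g ∧
      ∀ a b, M.Adj a b → ∃ i, s(g a, g b) = s((e i).1, (e i).2) := by
  let half (j : Fin (2 * k)) : Fin k := ⟨j / 2, by omega⟩
  let g (j : Fin (2 * k)) : β := if j.val % 2 = 0 then (e (half j)).1 else (e (half j)).2
  have hg : ∀ j, (e (half j)).1 ≤ g j ∧ g j ≤ (e (half j)).2 := by
    intro j
    by_cases h : j.val % 2 = 0 <;> simp [g, h, (he _).le]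
  refine ⟨g, fun i j hij => ?_, fun a b hab => ⟨half a, ?_⟩⟩
  · have hij' : i.val < j.val := hij
    rcases (Nat.div_le_div_right (c := 2) hij'.le).eq_or_lt with h | h
    · have hi : i.val % 2 = 0 := by omega
      have hj : j.val % 2 ≠ 0 := by omega
      simpa only [g, if_pos hi, if_neg hj, show half i = half j from Fin.ext h] using he _
    · exact (hg i).2.trans_lt ((hord _ _ h).trans_le (hg j).1)
  · obtain ⟨hne, hdiv⟩ := (hM a b).1 hab
    have hval : a.val ≠ b.val := Fin.val_ne_of_ne hne
    have hab' : half a = half b := Fin.ext hdiv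
    by_cases ha : a.val % 2 = 0
    · have hb : b.val % 2 ≠ 0 := by omega
      simp only [g, if_pos ha, if_neg hb, hab']
    · have hb : b.val % 2 = 0 := by omega
      simp only [g, if_pos hb, if_neg ha, hab']
      exact Sym2.eq_swap

theorem forall_avoidsOn_of_ordArrows
    (hM : ∀ a b : Fin (2 * k), M.Adj a b ↔ (a ≠ b ∧ a.val / 2 = b.val / 2))
    (hF : OrdArrows F H M) (P : Finset (Fin n)) (hP : P.card < k) :
    ∃ f, OrdCopy H F f ∧ AvoidsOn H Set.univ P f := by
  classical
  -- colour an edge red iff it spans no point of `P`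
  let χ : Sym2 (Fin n) → Bool :=
    Sym2.lift ⟨fun u v => decide (∀ a ∈ P, a ∉ Set.uIcc u v),
      fun u v => by dsimp only; rw [Set.uIcc_comm]⟩
  rcases hF χ with ⟨f, hf, hred⟩ | ⟨g, hg, hblue⟩
  · refine ⟨f, hf, fun u _ v _ huv a ha hmem => ?_⟩
    have := hred u v huv
    simp only [χ, Sym2.lift_mk, decide_eq_true_eq] at this
    exact this a ha (Set.Icc_subset_uIcc hmem)
  · have hspan : ∀ i : Fin k, ∃ a ∈ P,
        a ∈ Set.Icc (g ⟨2 * i, by omega⟩) (g ⟨2 * i + 1, by omega⟩) := by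
      intro i
      have hlt : g ⟨2 * i, by omega⟩ < g ⟨2 * i + 1, by omega⟩ := hg.1 (by simp [Fin.lt_def])
      have := hblue ⟨2 * i, by omega⟩ ⟨2 * i + 1, by omega⟩
        ((hM _ _).2 ⟨by simp [Fin.ext_iff], by simp only; omega⟩)
      simp only [χ, Sym2.lift_mk, decide_eq_false_iff_not, not_forall, not_not] at this
      obtain ⟨a, ha, hmem⟩ := this
      exact ⟨a, ha, Set.uIcc_of_le hlt.le ▸ hmem⟩
    choose a ha hmem using hspan
    -- two of the `k` disjoint blue intervals would share a point of `P`
    obtain ⟨i, -, j, -, hij, haij⟩ := Finset.exists_ne_map_eq_of_card_lt_of_maps_to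
      (s := Finset.univ) (by simpa using hP) (f := a) fun i _ => ha i
    wlog h : i < j generalizing i j
    · exact this j i hij.symm haij.symm (lt_of_le_of_ne (not_lt.1 h) hij.symm)
    have hgap : g ⟨2 * i + 1, by omega⟩ < g ⟨2 * j, by omega⟩ :=
      hg.1 (by simp only [Fin.lt_def] at h ⊢; omega)
    exact absurd ((hmem i).2.trans_lt (hgap.trans_le (haij ▸ (hmem j).1))) (lt_irrefl _)

theorem ordArrows_of_forall_avoidsOn
    (hM : ∀ a b : Fin (2 * k), M.Adj a b ↔ (a ≠ b ∧ a.val / 2 = b.val / 2))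
    (h : ∀ P : Finset (Fin n), P.card < k → ∃ f, OrdCopy H F f ∧ AvoidsOn H Set.univ P f) :
    OrdArrows F H M := by
  classical
  intro χ
  let E := Finset.univ.filter fun e : Fin n × Fin n =>
    e.1 < e.2 ∧ F.Adj e.1 e.2 ∧ χ s(e.1, e.2) = false
  rcases exists_chain_or_pierce E k with ⟨e, he, hord⟩ | ⟨P, hP, hpierce⟩
  · right
    have he' (i) : (e i).1 < (e i).2 ∧ F.Adj (e i).1 (e i).2 ∧ χ s((e i).1, (e i).2) = false :=
      (Finset.mem_filter.1 (he i)).2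
    obtain ⟨g, hg, hge⟩ := exists_strictMono_matching hM e (fun i => (he' i).1) hord
    refine ⟨g, ⟨hg, fun a b hab => ?_⟩, fun a b hab => ?_⟩ <;> obtain ⟨i, hi⟩ := hge a b hab
    · rw [← F.mem_edgeSet, hi, F.mem_edgeSet]
      exact (he' i).2.1
    · rw [hi]
      exact (he' i).2.2
  · left
    obtain ⟨f, hf, hfP⟩ := h P hP
    have hred : ∀ u v, H.Adj u v → f u < f v → χ s(f u, f v) = true := by
      intro u v huv hlt
      by_contra hblue
      obtain ⟨a, ha, hmem⟩ := hpierce (f u, f v)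
        (Finset.mem_filter.2 ⟨Finset.mem_univ _, hlt, hf.2 u v huv, by simpa using hblue⟩)
      exact hfP u trivial v trivial huv a ha hmem
    refine ⟨f, hf, fun u v huv => ?_⟩
    rcases lt_or_gt_of_ne (hf.1.injective.ne huv.ne) with hlt | hlt
    · exact hred u v huv hlt
    · rw [Sym2.eq_swap]
      exact hred v u huv.symm hlt

end MonotoneMatching

section Robustness

variable {m n : ℕ} {H : SimpleGraph (Fin m)} {F : SimpleGraph (Fin n)}

theorem IsEmbeddingOn.ordCopy {W : Set (Fin n)} {f : Fin m → Fin n}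
    (h : IsEmbeddingOn H F Set.univ W f) :
    OrdCopy H F f :=
  ⟨strictMonoOn_univ.1 h.2.1, fun u v huv => h.2.2 u trivial v trivial huv⟩

theorem OrdCopy.isEmbeddingOn {f : Fin m → Fin n} (h : OrdCopy H F f) (S : Set (Fin m)) :
    IsEmbeddingOn H F S Set.univ f :=
  ⟨Set.mapsTo_univ f S, h.1.strictMonoOn S, fun u _ v _ huv => h.2 u v huv⟩

def IsCut (H : SimpleGraph (Fin m)) (c : ℕ) : Prop :=
  ∀ u v, H.Adj u v → u.val < c → v.val < c

theorem isCut_zero : IsCut H 0 := fun _ _ _ hu => absurd hu (Nat.not_lt_zero _)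

/-- Every set of fewer than `t` points can be avoided by a copy of the part of `H` on the
vertices `≥ c`, placed inside `U` at positions `≥ x`. -/
def Robust (H : SimpleGraph (Fin m)) (F : SimpleGraph (Fin n)) (U : Finset (Fin n))
    (t x c : ℕ) : Prop :=
  ∀ P : Finset (Fin n), P.card < t → ∃ f,
    IsEmbeddingOn H F (Fin.val ⁻¹' Set.Ici c) (↑U ∩ Fin.val ⁻¹' Set.Ici x) f ∧
      AvoidsOn H (Fin.val ⁻¹' Set.Ici c) P f

theorem Robust.mono {U U' : Finset (Fin n)} {t t' x x' c : ℕ} (h : Robust H F U t x c)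
    (hU : U ⊆ U') (hx : x' ≤ x) (ht : t' ≤ t) : Robust H F U' t' x' c := by
  intro P hP
  obtain ⟨f, hf, hfP⟩ := h P (hP.trans_le ht)
  exact ⟨f, hf.mono subset_rfl fun u hu =>
    ⟨hU (hf.1 hu).1, hx.trans (Set.mem_Ici.1 (hf.1 hu).2)⟩, hfP⟩

theorem exists_cut_of_avoidsOn (hiso : ∀ v, ∃ w, H.Adj v w) {c : ℕ} (hc : IsCut H c)
    (hcm : c ≤ m) {W : Set (Fin n)} {f : Fin m → Fin n} {a : Fin n}
    (hf : IsEmbeddingOn H F (Fin.val ⁻¹' Set.Ici c) W f)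
    (ha : AvoidsOn H (Fin.val ⁻¹' Set.Ici c) {a} f) :
    ∃ c', c ≤ c' ∧ c' ≤ m ∧ IsCut H c' ∧ (∀ u ∈ Fin.val ⁻¹' Set.Ico c c', f u < a) ∧
      ∀ u ∈ Fin.val ⁻¹' Set.Ici c', a < f u := by
  classical
  have ha' : ∀ u v : Fin m, H.Adj u v → c ≤ u.val → c ≤ v.val → a ∉ Set.Icc (f u) (f v) :=
    fun u v huv hu hv => ha u hu v hv huv a (Finset.mem_singleton_self a)
  -- no vertex lands on `a`, since it has a neighbour
  have hne : ∀ u : Fin m, c ≤ u.val → f u ≠ a := by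
    intro u hu hua
    obtain ⟨w, huw⟩ := hiso u
    have hw : c ≤ w.val := not_lt.1 fun hw => (hc w u huw.symm hw).not_ge hu
    rcases le_total (f u) (f w) with h | h
    · exact ha' u w huw hu hw ⟨hua.le, hua ▸ h⟩
    · exact ha' w u huw.symm hw hu ⟨hua ▸ h, hua.ge⟩
  have hex : ∃ d, c ≤ d ∧ ∀ u : Fin m, d ≤ u.val → a < f u :=
    ⟨m, hcm, fun u hu => absurd u.isLt (not_lt.2 hu)⟩
  obtain ⟨hcd, habove⟩ := Nat.find_spec hex
  have hbelow : ∀ u : Fin m, c ≤ u.val → u.val < Nat.find hex → f u < a := by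
    intro u hu hlt
    refine (lt_or_gt_of_ne (hne u hu)).resolve_right fun hgt => Nat.find_min hex hlt ⟨hu, ?_⟩
    intro w hw
    rcases hw.eq_or_lt with h | h
    · rwa [Fin.ext h.symm]
    · exact hgt.trans (hf.2.1 hu (hu.trans h.le : c ≤ w.val) h)
  refine ⟨Nat.find hex, hcd, Nat.find_le ⟨hcm, fun u hu => absurd u.isLt (not_lt.2 hu)⟩,
    fun u v huv hu => ?_, fun u hu => hbelow u hu.1 hu.2, habove⟩
  by_contra hv
  by_cases huc : c ≤ u.val
  · exact ha' u v huv huc (hcd.trans (not_lt.1 hv))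
      ⟨(hbelow u huc hu).le, (habove v (not_lt.1 hv)).le⟩
  · exact hv ((hc u v huv (not_le.1 huc)).trans_le hcd)

theorem Robust.exists_cut (hiso : ∀ v, ∃ w, H.Adj v w) {t x c : ℕ} (hc : IsCut H c)
    (hcm : c ≤ m) (hR : Robust H F Finset.univ (t + 1) x c) (a : Fin n) :
    ∃ c', c ≤ c' ∧ c' ≤ m ∧ IsCut H c' ∧
      (∃ g, IsEmbeddingOn H F (Fin.val ⁻¹' Set.Ico c c') (Fin.val ⁻¹' Set.Ico x a) g) ∧
      Robust H F Finset.univ t (max (a + 1) x) c' := by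
  classical
  obtain ⟨f₀, hf₀, -⟩ := hR ∅ (by simp)
  let Q (d : ℕ) : Prop := c ≤ d ∧ d ≤ m ∧ IsCut H d ∧
    ∃ g, IsEmbeddingOn H F (Fin.val ⁻¹' Set.Ico c d) (Fin.val ⁻¹' Set.Ico x a) g
  have hQc : Q c := ⟨le_rfl, hcm, hc, f₀, hf₀.mono (by simp) (by simp [Set.mapsTo_empty])⟩
  -- A copy avoiding `a` and further points splits at a cut `d`, and `d ≤ c'` for the largest
  -- cut `c'` admitting a block below `a`; so the copy's part beyond `c'` lies above `a`.
  obtain ⟨hcc', hc'm, hcut, hg⟩ : Q (Nat.findGreatest Q m) := Nat.findGreatest_spec hcm hQc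
  refine ⟨_, hcc', hc'm, hcut, hg, fun P hP => ?_⟩
  obtain ⟨f, hf, hfP⟩ := hR (insert a P) ((Finset.card_insert_le a P).trans_lt (by omega))
  obtain ⟨d, hcd, hdm, hdcut, hlt, hgt⟩ := exists_cut_of_avoidsOn (a := a) hiso hc hcm hf
    (hfP.mono subset_rfl (by simp))
  have hd : d ≤ Nat.findGreatest Q m := Nat.le_findGreatest hdm
    ⟨hcd, hdm, hdcut, f, hf.mono (fun u hu => hu.1) fun u hu =>
      ⟨Set.mem_Ici.1 (hf.1 hu.1).2, hlt u hu⟩⟩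
  have hsub : (Fin.val ⁻¹' Set.Ici (Nat.findGreatest Q m) : Set (Fin m)) ⊆ Fin.val ⁻¹' Set.Ici c :=
    fun u hu => hcc'.trans hu
  refine ⟨f, hf.mono hsub fun u hu => ⟨Finset.mem_coe.2 (Finset.mem_univ _), ?_⟩,
    hfP.mono hsub (Finset.subset_insert a P)⟩
  exact show max ((a : ℕ) + 1) x ≤ f u from max_le (hgt u (hd.trans hu)) (hf.1 (hsub hu)).2

def robustBound (m : ℕ) : ℕ → ℕ
  | 0 => 0
  | t + 1 => (m + 1) * (robustBound m t + m)

theorem exists_min_index {α : Type*} [Nonempty α] (Q : ℕ → α → Prop) :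
    ∃ (g : α) (y : ℕ), ∀ g' y', Q y' g' → Q y g ∧ y ≤ y' := by
  classical
  by_cases hex : ∃ y g, Q y g
  · obtain ⟨g, hg⟩ := Nat.find_spec hex
    exact ⟨g, Nat.find hex, fun g' y' hg' => ⟨hg, Nat.find_min' hex ⟨g', hg'⟩⟩⟩
  · exact ⟨Classical.arbitrary α, 0, fun g' y' hg' => absurd ⟨y', g', hg'⟩ hex⟩

theorem card_biUnion_le_robustBound {t : ℕ} (V : ℕ → Finset (Fin n))
    (hV : ∀ c, (V c).card ≤ robustBound m t) (g : ℕ → Fin m → Fin n) :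
    ((Finset.range (m + 1)).biUnion fun c => V c ∪ Finset.univ.image (g c)).card ≤
      robustBound m (t + 1) := by
  classical
  calc _ ≤ ∑ c ∈ Finset.range (m + 1), (V c ∪ Finset.univ.image (g c)).card :=
        Finset.card_biUnion_le
    _ ≤ ∑ c ∈ Finset.range (m + 1), (robustBound m t + m) :=
        Finset.sum_le_sum fun c _ => (Finset.card_union_le _ _).trans
          (add_le_add (hV c) (Finset.card_image_le.trans (by simp)))
    _ = robustBound m (t + 1) := by simp [robustBound]

theorem exists_avoidsOn_of_block_of_suffix {U P : Finset (Fin n)} {a : Fin n} (ha : a ∈ P)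
    (haP : ∀ b ∈ P, a ≤ b) {c cs x y : ℕ} (hccs : c ≤ cs) (hcut : IsCut H cs) (hya : y ≤ a)
    {g h : Fin m → Fin n}
    (hg : IsEmbeddingOn H F (Fin.val ⁻¹' Set.Ico c cs) (↑U ∩ Fin.val ⁻¹' Set.Ico x y) g)
    (hh : IsEmbeddingOn H F (Fin.val ⁻¹' Set.Ici cs)
      (↑U ∩ Fin.val ⁻¹' Set.Ici (max ((a : ℕ) + 1) x)) h)
    (hhP : AvoidsOn H (Fin.val ⁻¹' Set.Ici cs) (P.erase a) h) :
    ∃ f, IsEmbeddingOn H F (Fin.val ⁻¹' Set.Ici c) (↑U ∩ Fin.val ⁻¹' Set.Ici x) f ∧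
      AvoidsOn H (Fin.val ⁻¹' Set.Ici c) P f := by
  classical
  have hS : ∀ u ∈ (Fin.val ⁻¹' Set.Ico c cs : Set (Fin m)), ∀ v ∈ Fin.val ⁻¹' Set.Ici cs,
      u < v := fun u hu v hv => Fin.lt_def.2 (hu.2.trans_le hv)
  have hcross : ∀ u ∈ (Fin.val ⁻¹' Set.Ico c cs : Set (Fin m)), ∀ v ∈ Fin.val ⁻¹' Set.Ici cs,
      ¬ H.Adj u v := fun u hu v hv huv => (hcut u v huv hu.2).not_ge hv
  have hunion : (Fin.val ⁻¹' Set.Ico c cs ∪ Fin.val ⁻¹' Set.Ici cs : Set (Fin m)) =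
      Fin.val ⁻¹' Set.Ici c := by
    rw [← Set.preimage_union, Set.Ico_union_Ici_eq_Ici hccs]
  refine ⟨(Fin.val ⁻¹' Set.Ico c cs).piecewise g h, ?_, ?_⟩
  · have hW : ∀ b ∈ (↑U ∩ Fin.val ⁻¹' Set.Ico x y : Set (Fin n)),
        ∀ b' ∈ (↑U ∩ Fin.val ⁻¹' Set.Ici (max ((a : ℕ) + 1) x) : Set (Fin n)), b < b' :=
      fun b hb b' hb' => Fin.lt_def.2 ((hb.2.2.trans_le hya).trans_le
        ((Nat.le_succ _).trans ((le_max_left _ x).trans hb'.2)))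
    have hglue := hg.piecewise hh hS hW hcross
    rw [hunion] at hglue
    refine hglue.mono subset_rfl (hglue.1.mono_right ?_)
    rintro b (⟨hbU, hb⟩ | ⟨hbU, hb⟩)
    · exact ⟨hbU, hb.1⟩
    · exact ⟨hbU, show x ≤ b.val from (le_max_right _ _).trans hb⟩
  · have hblock : AvoidsOn H (Fin.val ⁻¹' Set.Ico c cs) P g :=
      avoidsOn_of_lt fun u hu b hb =>
        Fin.lt_def.2 (((hg.1 hu).2.2.trans_le hya).trans_le (haP b hb))
    have hsuffix : AvoidsOn H (Fin.val ⁻¹' Set.Ici cs) P h := by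
      rw [← Finset.insert_erase ha]
      exact hhP.insert_of_lt fun u hu => Fin.lt_def.2 (Nat.add_one_le_iff.1
        (le_of_max_le_left ((hh.1 hu).2 : max ((a : ℕ) + 1) x ≤ h u)))
    simpa only [hunion] using hblock.piecewise hsuffix hS hcross

theorem Robust.exists_small_succ (hiso : ∀ v, ∃ w, H.Adj v w) {t : ℕ}
    (ih : ∀ c x, c ≤ m → IsCut H c → Robust H F Finset.univ t x c →
      ∃ V : Finset (Fin n), V.card ≤ robustBound m t ∧ Robust H F V t x c)
    {x c : ℕ} (hc : IsCut H c) (hcm : c ≤ m) (hR : Robust H F Finset.univ (t + 1) x c) :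
    ∃ U : Finset (Fin n), U.card ≤ robustBound m (t + 1) ∧ Robust H F U (t + 1) x c := by
  classical
  obtain ⟨f₀, hf₀, -⟩ := hR ∅ (by simp)
  -- for every cut `c'`, a small witness set for the part beyond `c'`, at the highest level
  -- `X c'` that the part allows, so that it serves every lower level
  let X (c' : ℕ) : ℕ := Nat.findGreatest (fun s => Robust H F Finset.univ t s c') (n + x)
  have hV : ∀ c', ∃ V : Finset (Fin n), V.card ≤ robustBound m t ∧
      (c' ≤ m → IsCut H c' → Robust H F Finset.univ t (X c') c' → Robust H F V t (X c') c') := by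
    intro c'
    by_cases h : c' ≤ m ∧ IsCut H c' ∧ Robust H F Finset.univ t (X c') c'
    · obtain ⟨V, hV, hVR⟩ := ih c' (X c') h.1 h.2.1 h.2.2
      exact ⟨V, hV, fun _ _ _ => hVR⟩
    · exact ⟨∅, by simp, fun h₁ h₂ h₃ => absurd ⟨h₁, h₂, h₃⟩ h⟩
  choose V hVcard hVR using hV
  -- and a copy of the block between `c` and `c'` with the lowest possible top `y c'`, so that
  -- it fits below every point below which some copy fits
  have : Nonempty (Fin m → Fin n) := ⟨f₀⟩
  choose g y hgy using fun c' => exists_min_index fun y' g' =>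
    IsEmbeddingOn H F (Fin.val ⁻¹' Set.Ico c c') (Fin.val ⁻¹' Set.Ico x y') g'
  let U := (Finset.range (m + 1)).biUnion fun c' => V c' ∪ Finset.univ.image (g c')
  have hmem : ∀ c' ≤ m, V c' ∪ Finset.univ.image (g c') ⊆ U := fun c' hc' =>
    Finset.subset_biUnion_of_mem (fun c' => V c' ∪ Finset.univ.image (g c'))
      (Finset.mem_range.2 (Nat.lt_succ_of_le hc'))
  have hgU : ∀ c' ≤ m, ∀ u, g c' u ∈ U := fun c' hc' u =>
    hmem c' hc' (Finset.mem_union_right _ (Finset.mem_image_of_mem _ (Finset.mem_univ u)))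
  refine ⟨U, card_biUnion_le_robustBound V hVcard g, fun P hP => ?_⟩
  rcases P.eq_empty_or_nonempty with rfl | hPne
  · -- nothing to avoid: the whole part beyond `c` is a single block
    obtain ⟨hgm, -⟩ := hgy m f₀ n
      (hf₀.mono (fun u hu => hu.1) fun u hu => ⟨(hf₀.1 hu.1).2, (f₀ u).isLt⟩)
    refine ⟨g m, hgm.mono (fun u hu => ⟨hu, u.isLt⟩) fun u hu =>
      ⟨hgU m le_rfl u, (hgm.1 ⟨hu, u.isLt⟩).1⟩, by simp [AvoidsOn]⟩
  obtain ⟨a, ha, haP⟩ : ∃ a ∈ P, ∀ b ∈ P, a ≤ b := ⟨_, P.min'_mem hPne, fun b hb => P.min'_le b hb⟩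
  obtain ⟨cs, hccs, hcsm, hcut, ⟨g', hg'⟩, hRs⟩ := hR.exists_cut hiso hc hcm a
  have hXs : max ((a : ℕ) + 1) x ≤ X cs := Nat.le_findGreatest (by omega) hRs
  obtain ⟨h, hh, hhP⟩ := ((hVR cs hcsm hcut (Nat.findGreatest_spec
    (P := fun s => Robust H F Finset.univ t s cs) (by omega) hRs)).mono
    (Finset.subset_union_left.trans (hmem cs hcsm)) hXs le_rfl) (P.erase a)
    (by have := Finset.card_erase_lt_of_mem ha; omega)
  obtain ⟨hgcs, hya⟩ := hgy cs g' a hg'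
  exact exists_avoidsOn_of_block_of_suffix ha haP hccs hcut hya
    (hgcs.mono subset_rfl fun u hu => ⟨hgU cs hcsm u, hgcs.1 hu⟩) hh hhP

theorem Robust.exists_small (hiso : ∀ v, ∃ w, H.Adj v w) :
    ∀ t c x, c ≤ m → IsCut H c → Robust H F Finset.univ t x c →
      ∃ U : Finset (Fin n), U.card ≤ robustBound m t ∧ Robust H F U t x c
  | 0, _, _, _, _, _ => ⟨∅, by simp [robustBound], fun _ hP => absurd hP (Nat.not_lt_zero _)⟩
  | t + 1, _, _, hcm, hc, hR => Robust.exists_small_succ hiso (Robust.exists_small hiso t) hc hcm hR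

theorem robust_univ_of_forall_avoidsOn {t : ℕ}
    (h : ∀ P : Finset (Fin n), P.card < t → ∃ f, OrdCopy H F f ∧ AvoidsOn H Set.univ P f) :
    Robust H F Finset.univ t 0 0 := by
  intro P hP
  obtain ⟨f, hf, hfP⟩ := h P hP
  exact ⟨f, (OrdCopy.isEmbeddingOn hf _).mono subset_rfl fun u _ => by simp,
    hfP.mono (Set.subset_univ _) subset_rfl⟩

theorem Robust.forall_avoidsOn_comap {U : Finset (Fin n)} {t : ℕ} (h : Robust H F U t 0 0)
    (P : Finset (Fin U.card)) (hP : P.card < t) :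
    ∃ f, OrdCopy H (F.comap (U.orderEmbOfFin rfl)) f ∧ AvoidsOn H Set.univ P f := by
  let φ := U.orderEmbOfFin rfl
  have hS : (Fin.val ⁻¹' Set.Ici 0 : Set (Fin m)) = Set.univ := by ext; simp
  obtain ⟨f, hf, hfP⟩ := h (P.map φ.toEmbedding) (by rwa [Finset.card_map])
  rw [hS] at hf hfP
  have hrange : ∀ u, f u ∈ Set.range φ := fun u => by
    rw [Finset.range_orderEmbOfFin]
    exact (hf.1 (Set.mem_univ u)).1
  choose f' hf' using hrange
  rw [show f = φ ∘ f' from (funext hf').symm] at hf hfP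
  exact ⟨f', (hf.comap φ).ordCopy, hfP.comap φ⟩

end Robustness

end OrderedRamsey

theorem MinimalOrdRamsey.le_of_ordArrows {m m' n k : ℕ} {F : SimpleGraph (Fin n)}
    {H : SimpleGraph (Fin m)} {H' : SimpleGraph (Fin m')} (hF : MinimalOrdRamsey F H H')
    {G : SimpleGraph (Fin k)} (hG : IsOrdSubgraph G F) (hA : OrdArrows G H H') : n ≤ k := by
  by_contra hlt
  refine hF.2 k G hG (fun ⟨φ, hφ, _⟩ => hlt ?_) hA
  simpa using Fintype.card_le_of_injective φ hφ.injective

open OrderedRamsey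

/-- If `H'` is a monotone matching and `H` is any ordered graph without isolated vertices,
then `(H, H')` is Ramsey finite: minimal ordered Ramsey graphs have boundedly many
vertices (hence there are only finitely many up to order-isomorphism). -/
theorem stmt11 {m k : ℕ} (H : SimpleGraph (Fin m)) (hiso : ∀ v, ∃ w, H.Adj v w)
    (H' : SimpleGraph (Fin (2 * k)))
    (hH' : ∀ a b : Fin (2 * k), H'.Adj a b ↔ (a ≠ b ∧ a.val / 2 = b.val / 2)) :
    ∃ N : ℕ, ∀ (n : ℕ) (F : SimpleGraph (Fin n)), MinimalOrdRamsey F H H' → n ≤ N := by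
  refine ⟨robustBound m k, fun n F hF => ?_⟩
  obtain ⟨U, hU, hUR⟩ := Robust.exists_small hiso k 0 0 (Nat.zero_le m) isCut_zero
    (robust_univ_of_forall_avoidsOn (forall_avoidsOn_of_ordArrows hH' hF.1))
  have hsub : IsOrdSubgraph (F.comap (U.orderEmbOfFin rfl)) F :=
    ⟨_, (U.orderEmbOfFin rfl).strictMono, fun _ _ h => h⟩
  exact (hF.le_of_ordArrows hsub
    (ordArrows_of_forall_avoidsOn hH' hUR.forall_avoidsOn_comap)).trans hU
end

section
/- Suppose H and H' are χ-unavoidable ordered graphs (for each there exists k such that every ordered graph of chromatic number at least k contains an ordered copy) and no forest is an ordered Ramsey graph of (H,H'). Then, assuming for every k and t there exists a graph of chromatic number at least k and girth at least t, the pair (H,H') is Ramsey infinite. -/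
/-- `H` is χ-unavoidable: some `k` exists so that every ordered graph of chromatic number
at least `k` contains an ordered copy of `H`. -/
def ChiUnavoidable {m : ℕ} (H : SimpleGraph (Fin m)) : Prop :=
  ∃ k : ℕ, ∀ (n : ℕ) (G : SimpleGraph (Fin n)),
    (k : ℕ∞) ≤ G.chromaticNumber → ∃ f, OrdCopy H G f

/-!
If `χ(G) > k k'`, then in any red/blue colouring of `G` the red or the blue graph has chromatic
number at least `k` or `k'` respectively, so `G → (H, H')`. Take such a `G` of girth larger than
`N`. Descending lexicographically in (vertices, edges), `G` contains a minimal ordered Ramsey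
graph `F` of `(H, H')`. If `F` had at most `N` vertices, a cycle of `F` would be a cycle of
length at most `N` in `G`; so `F` would be a forest, which no Ramsey graph of `(H, H')` is.
-/

namespace SimpleGraph

variable {V W : Type*}

theorem Colorable.sup {G₁ G₂ : SimpleGraph V} {a b : ℕ} (h₁ : G₁.Colorable a)
    (h₂ : G₂.Colorable b) : (G₁ ⊔ G₂).Colorable (a * b) := by
  obtain ⟨C₁⟩ := h₁
  obtain ⟨C₂⟩ := h₂
  let C : (G₁ ⊔ G₂).Coloring (Fin a × Fin b) :=
    Coloring.mk (fun v => (C₁ v, C₂ v)) <| by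
      rintro u v (huv | huv) heq
      · exact C₁.valid huv (congrArg Prod.fst heq)
      · exact C₂.valid huv (congrArg Prod.snd heq)
  simpa using C.colorable

theorem le_chromaticNumber_or_of_lt_chromaticNumber_sup {G₁ G₂ : SimpleGraph V} {a b : ℕ}
    (h : ((a * b : ℕ) : ℕ∞) < (G₁ ⊔ G₂).chromaticNumber) :
    (a : ℕ∞) ≤ G₁.chromaticNumber ∨ (b : ℕ∞) ≤ G₂.chromaticNumber := by
  by_contra! hlt
  have hcol : (G₁ ⊔ G₂).Colorable (a * b) :=
    (chromaticNumber_le_iff_colorable.mp hlt.1.le).sup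
      (chromaticNumber_le_iff_colorable.mp hlt.2.le)
  exact h.not_ge hcol.chromaticNumber_le

def edgeColorClass (G : SimpleGraph V) (c : Sym2 V → Bool) (b : Bool) : SimpleGraph V :=
  G.deleteEdges {e | c e ≠ b}

@[simp]
theorem edgeColorClass_adj {G : SimpleGraph V} {c : Sym2 V → Bool} {b : Bool} {u v : V} :
    (G.edgeColorClass c b).Adj u v ↔ G.Adj u v ∧ c s(u, v) = b := by
  simp [edgeColorClass]

theorem edgeColorClass_true_sup_false (G : SimpleGraph V) (c : Sym2 V → Bool) :
    G.edgeColorClass c true ⊔ G.edgeColorClass c false = G := by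
  ext u v
  simp only [sup_adj, edgeColorClass_adj, ← and_or_left]
  cases c s(u, v) <;> simp

theorem girth_le_card [Fintype V] {G : SimpleGraph V} (hG : ¬ G.IsAcyclic) :
    G.girth ≤ Fintype.card V := by
  obtain ⟨a, w, hw, hlen⟩ := exists_girth_eq_length.mpr hG
  have hsupp := hw.support_nodup.length_le_card
  rw [List.length_tail, w.length_support] at hsupp
  omega

theorem IsContained.isAcyclic_of_card_lt_girth [Fintype W] {F : SimpleGraph W}
    {G : SimpleGraph V} (h : F.IsContained G) (hG : Fintype.card W < G.girth) : F.IsAcyclic := by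
  by_contra hF
  have := (h.girth_le hF).trans (girth_le_card hF)
  omega

end SimpleGraph

section Ordered

variable {m m' k n : ℕ} {H : SimpleGraph (Fin m)} {H' : SimpleGraph (Fin m')}

theorem IsOrdSubgraph.refl (F : SimpleGraph (Fin n)) : IsOrdSubgraph F F :=
  ⟨id, strictMono_id, fun _ _ h => h⟩

theorem IsOrdSubgraph.trans {j : ℕ} {F₁ : SimpleGraph (Fin j)} {F₂ : SimpleGraph (Fin k)}
    {F₃ : SimpleGraph (Fin n)} (h₁₂ : IsOrdSubgraph F₁ F₂) (h₂₃ : IsOrdSubgraph F₂ F₃) :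
    IsOrdSubgraph F₁ F₃ :=
  let ⟨φ, hφ, hφadj⟩ := h₁₂
  let ⟨ψ, hψ, hψadj⟩ := h₂₃
  ⟨ψ ∘ φ, hψ.comp hφ, fun u v huv => hψadj _ _ (hφadj u v huv)⟩

theorem IsOrdSubgraph.isContained {F' : SimpleGraph (Fin k)} {F : SimpleGraph (Fin n)}
    (h : IsOrdSubgraph F' F) : F'.IsContained F :=
  let ⟨φ, hφ, hadj⟩ := h
  ⟨⟨⟨φ, hadj _ _⟩, hφ.injective⟩⟩

theorem IsOrdSubgraph.toLex_lt {F' : SimpleGraph (Fin k)} {F : SimpleGraph (Fin n)}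
    (h : IsOrdSubgraph F' F) (hproper : ¬ IsOrdSubgraph F F') :
    toLex (k, F'.edgeSet.ncard) < toLex (n, F.edgeSet.ncard) := by
  obtain ⟨φ, hφ, hadj⟩ := h
  have hkn : k ≤ n := by simpa using Fintype.card_le_of_injective φ hφ.injective
  rw [Prod.Lex.toLex_lt_toLex]
  rcases hkn.lt_or_eq with hlt | rfl
  · exact .inl hlt
  refine .inr ⟨rfl, Set.ncard_lt_ncard ?_ (Set.toFinite _)⟩
  rw [hφ.eq_id] at hadj
  have hle : F' ≤ F := fun {u v} huv => hadj u v huv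
  have hne : F' ≠ F := by
    rintro rfl
    exact hproper (.refl F')
  exact SimpleGraph.edgeSet_ssubset_edgeSet.mpr (hle.lt_of_ne hne)

theorem exists_minimalOrdRamsey_isOrdSubgraph {F : SimpleGraph (Fin n)}
    (hF : OrdArrows F H H') :
    ∃ (k : ℕ) (F₀ : SimpleGraph (Fin k)), MinimalOrdRamsey F₀ H H' ∧ IsOrdSubgraph F₀ F := by
  let S : Set (ℕ ×ₗ ℕ) := {p | ∃ (k : ℕ) (F' : SimpleGraph (Fin k)),
    IsOrdSubgraph F' F ∧ OrdArrows F' H H' ∧ toLex (k, F'.edgeSet.ncard) = p}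
  obtain ⟨-, ⟨k, F₀, hsub, harr, rfl⟩, hmin⟩ :=
    wellFounded_lt.has_min S ⟨_, n, F, .refl F, hF, rfl⟩
  refine ⟨k, F₀, ⟨harr, fun j F' h hproper harr' => ?_⟩, hsub⟩
  exact hmin _ ⟨j, F', h.trans hsub, harr', rfl⟩ (h.toLex_lt hproper)

theorem OrdCopy.of_edgeColorClass {G : SimpleGraph (Fin n)} {c : Sym2 (Fin n) → Bool}
    {b : Bool} {f : Fin m → Fin n} (hf : OrdCopy H (G.edgeColorClass c b) f) :
    OrdCopy H G f ∧ ∀ u v, H.Adj u v → c s(f u, f v) = b := by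
  have hadj u v (huv : H.Adj u v) := SimpleGraph.edgeColorClass_adj.mp (hf.2 u v huv)
  exact ⟨⟨hf.1, fun u v huv => (hadj u v huv).1⟩, fun u v huv => (hadj u v huv).2⟩

theorem ChiUnavoidable.exists_ordArrows (hH : ChiUnavoidable H) (hH' : ChiUnavoidable H') :
    ∃ K : ℕ, ∀ (n : ℕ) (G : SimpleGraph (Fin n)),
      (K : ℕ∞) ≤ G.chromaticNumber → OrdArrows G H H' := by
  obtain ⟨k, hk⟩ := hH
  obtain ⟨k', hk'⟩ := hH'
  refine ⟨k * k' + 1, fun n G hG c => ?_⟩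
  have hsup : ((k * k' : ℕ) : ℕ∞) <
      (G.edgeColorClass c true ⊔ G.edgeColorClass c false).chromaticNumber := by
    rw [G.edgeColorClass_true_sup_false c]
    exact lt_of_lt_of_le (by exact_mod_cast (k * k').lt_succ_self) hG
  rcases SimpleGraph.le_chromaticNumber_or_of_lt_chromaticNumber_sup hsup with hred | hblue
  · obtain ⟨f, hf⟩ := hk n _ hred
    exact .inl ⟨f, hf.of_edgeColorClass⟩
  · obtain ⟨g, hg⟩ := hk' n _ hblue
    exact .inr ⟨g, hg.of_edgeColorClass⟩

end Ordered

/-- If `H` and `H'` are χ-unavoidable ordered graphs, no forest is an ordered Ramsey graph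
of `(H, H')`, and (Erdős) for all `k, t` there is a graph of chromatic number ≥ `k` and
girth ≥ `t`, then `(H, H')` is Ramsey infinite. -/
theorem stmt15 {m m' : ℕ} (H : SimpleGraph (Fin m)) (H' : SimpleGraph (Fin m'))
    (hH : ChiUnavoidable H) (hH' : ChiUnavoidable H')
    (hnoforest : ∀ (n : ℕ) (F : SimpleGraph (Fin n)), F.IsAcyclic → ¬ OrdArrows F H H')
    (herdos : ∀ k t : ℕ, ∃ (n : ℕ) (G : SimpleGraph (Fin n)),
      (k : ℕ∞) ≤ G.chromaticNumber ∧ (t : ℕ∞) ≤ G.girth) :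
    ¬ ∃ N : ℕ, ∀ (n : ℕ) (F : SimpleGraph (Fin n)), MinimalOrdRamsey F H H' → n ≤ N := by
  rintro ⟨N, hN⟩
  obtain ⟨K, hK⟩ := hH.exists_ordArrows hH'
  obtain ⟨n, G, hχ, hgirth⟩ := herdos K (N + 1)
  obtain ⟨k, F, hF, hFG⟩ := exists_minimalOrdRamsey_isOrdSubgraph (hK n G hχ)
  have hk : k < G.girth := by
    have := hN k F hF
    have : N + 1 ≤ G.girth := by exact_mod_cast hgirth
    omega
  exact hnoforest k F (hFG.isContained.isAcyclic_of_card_lt_girth (by simpa using hk)) hF.1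
end

section
/- Let H be an ordered graph and F a minimal ordered Ramsey graph of H. Then there exists a red/blue coloring of the edges of F such that every monochromatic ordered copy of H in F contains the leftmost vertex of F, and likewise a coloring such that every monochromatic copy contains the rightmost vertex of F. Consequently, if H and H' are ordered graphs with the same set of ordered Ramsey graphs and H is an ordered subgraph of H', then every ordered copy of H in H' contains both the leftmost and the rightmost vertex of H'. -/
open Finset

section Ramsey

variable {α : Type*}

def HasMonoSubset (c : Sym2 α → Bool) (b : Bool) (a : ℕ) (s : Finset α) : Prop :=
  ∃ t ⊆ s, #t = a ∧ (t : Set α).Pairwise fun u v => c s(u, v) = b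

variable {c : Sym2 α → Bool} {b : Bool} {a : ℕ} {s t : Finset α}

lemma hasMonoSubset_zero (c : Sym2 α → Bool) (b : Bool) (s : Finset α) :
    HasMonoSubset c b 0 s :=
  ⟨∅, empty_subset s, rfl, by simp⟩

lemma HasMonoSubset.mono (h : HasMonoSubset c b a t) (hts : t ⊆ s) : HasMonoSubset c b a s :=
  let ⟨u, hut, hu, hmono⟩ := h
  ⟨u, hut.trans hts, hu, hmono⟩

lemma HasMonoSubset.succ_of_subset_erase [DecidableEq α] {x : α} (h : HasMonoSubset c b a t)
    (hx : x ∈ s) (ht : t ⊆ s.erase x) (hxt : ∀ y ∈ t, c s(x, y) = b) :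
    HasMonoSubset c b (a + 1) s := by
  obtain ⟨u, hut, rfl, hmono⟩ := h
  refine ⟨insert x u, insert_subset hx ((hut.trans ht).trans (erase_subset x s)),
    card_insert_of_notMem fun hxu => notMem_erase x s (ht (hut hxu)), ?_⟩
  rw [coe_insert, Set.pairwise_insert]
  exact ⟨hmono, fun y hy _ => ⟨hxt y (hut hy), Sym2.eq_swap ▸ hxt y (hut hy)⟩⟩

theorem hasMonoSubset_or_of_choose_le [DecidableEq α] (a b : ℕ) (c : Sym2 α → Bool)
    (s : Finset α) (hs : (a + b).choose a ≤ #s) :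
    HasMonoSubset c true a s ∨ HasMonoSubset c false b s := by
  induction a generalizing b s with
  | zero => exact .inl (hasMonoSubset_zero c true s)
  | succ a iha =>
    induction b generalizing s with
    | zero => exact .inr (hasMonoSubset_zero c false s)
    | succ b ihb =>
      obtain ⟨x, hx⟩ : s.Nonempty := card_pos.mp <| (Nat.choose_pos (by omega)).trans_le hs
      set red := (s.erase x).filter fun y => c s(x, y) = true
      set blue := (s.erase x).filter fun y => ¬ c s(x, y) = true
      have hred_sub : red ⊆ s.erase x := filter_subset _ _
      have hblue_sub : blue ⊆ s.erase x := filter_subset _ _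
      have hsplit : #red + #blue + 1 = #s := by
        rw [card_filter_add_card_filter_not, card_erase_add_one hx]
      have hchoose : (a + 1 + (b + 1)).choose (a + 1) =
          (a + (b + 1)).choose a + (a + 1 + b).choose (a + 1) := by
        rw [show a + 1 + (b + 1) = a + 1 + b + 1 by omega, Nat.choose_succ_succ',
          show a + 1 + b = a + (b + 1) by omega]
      rcases le_or_gt ((a + (b + 1)).choose a) #red with hred | hred
      · refine (iha (b + 1) red hred).imp (fun h => ?_)
          (·.mono (hred_sub.trans (erase_subset x s)))
        exact h.succ_of_subset_erase hx hred_sub fun y hy => (mem_filter.mp hy).2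
      · refine (ihb blue (by omega)).imp (·.mono (hblue_sub.trans (erase_subset x s)))
          (fun h => ?_)
        exact h.succ_of_subset_erase hx hblue_sub fun y hy => by
          simpa using (mem_filter.mp hy).2

end Ramsey

section OrderedRamsey

variable {m m' k n : ℕ} {H : SimpleGraph (Fin m)} {H' : SimpleGraph (Fin m')}
  {F : SimpleGraph (Fin n)}

lemma OrdCopy.comp {G : SimpleGraph (Fin k)} {f : Fin m → Fin k} {g : Fin k → Fin n}
    (hg : OrdCopy G F g) (hf : OrdCopy H G f) : OrdCopy H F (g ∘ f) :=
  ⟨hg.1.comp hf.1, fun u v h => hg.2 _ _ (hf.2 u v h)⟩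

lemma exists_ordCopy_top_of_hasMonoSubset {c : Sym2 (Fin n) → Bool} {b : Bool}
    (h : HasMonoSubset c b m univ) :
    ∃ f, OrdCopy H ⊤ f ∧ ∀ u v, H.Adj u v → c s(f u, f v) = b := by
  obtain ⟨t, -, ht, hmono⟩ := h
  have hne {u v : Fin m} (huv : H.Adj u v) : t.orderEmbOfFin ht u ≠ t.orderEmbOfFin ht v :=
    (t.orderEmbOfFin ht).injective.ne huv.ne
  exact ⟨t.orderEmbOfFin ht, ⟨(t.orderEmbOfFin ht).strictMono, fun u v huv => hne huv⟩,
    fun u v huv => hmono (t.orderEmbOfFin_mem ht u) (t.orderEmbOfFin_mem ht v) (hne huv)⟩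

theorem exists_ordArrows (H : SimpleGraph (Fin m)) (H' : SimpleGraph (Fin m')) :
    ∃ (n : ℕ) (F : SimpleGraph (Fin n)), OrdArrows F H H' :=
  ⟨(m + m').choose m, ⊤, fun c =>
    (hasMonoSubset_or_of_choose_le m m' c univ (by simp)).imp
      exists_ordCopy_top_of_hasMonoSubset exists_ordCopy_top_of_hasMonoSubset⟩

lemma IsOrdSubgraph.card_le {F' : SimpleGraph (Fin k)} (h : IsOrdSubgraph F' F) : k ≤ n := by
  obtain ⟨φ, hφ, -⟩ := h
  simpa using Fintype.card_le_of_injective φ hφ.injective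

noncomputable def ordSize (F : SimpleGraph (Fin n)) : ℕ := n + F.edgeSet.ncard

lemma IsOrdSubgraph.ordSize_lt {F' : SimpleGraph (Fin k)} (h : IsOrdSubgraph F' F)
    (hF : ¬ IsOrdSubgraph F F') : ordSize F' < ordSize F := by
  have hkn := h.card_le
  obtain ⟨φ, hφ, hadj⟩ := h
  have hedges : F'.edgeSet.ncard ≤ F.edgeSet.ncard := by
    refine Set.ncard_le_ncard_of_injOn (Sym2.map φ) (fun e he => ?_)
      (Sym2.map.injective hφ.injective).injOn (Set.toFinite _)
    induction e with
    | h u v => exact hadj u v he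
  obtain hlt | rfl := hkn.lt_or_eq
  · unfold ordSize; omega
  obtain rfl : φ = id := (hφ.range_inj strictMono_id).mp <| by
    rw [Set.range_id, Set.range_eq_univ, ← Finite.injective_iff_surjective]
    exact hφ.injective
  have hlt : F' < F := lt_of_le_not_ge (fun u v h => hadj u v h)
    fun hle => hF ⟨id, strictMono_id, fun u v h => hle h⟩
  have := Set.ncard_lt_ncard (SimpleGraph.edgeSet_ssubset_edgeSet.mpr hlt) (Set.toFinite _)
  unfold ordSize; omega

theorem exists_minimalOrdRamsey (h : OrdArrows F H H') :
    ∃ (n : ℕ) (F : SimpleGraph (Fin n)), MinimalOrdRamsey F H H' := by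
  obtain ⟨⟨n, F⟩, hF, hmin⟩ :=
    (InvImage.wf (fun p : Σ n, SimpleGraph (Fin n) => ordSize p.2) wellFounded_lt).has_min
      {p | OrdArrows p.2 H H'} ⟨⟨n, F⟩, h⟩
  exact ⟨n, F, hF, fun k F' hsub hnsub harr => hmin ⟨k, F'⟩ harr (hsub.ordSize_lt hnsub)⟩

lemma exists_coloring_of_not_ordArrows_comap {φ : Fin k → Fin n} (hφ : StrictMono φ)
    (h : ¬ OrdArrows (F.comap φ) H H') :
    ∃ c : Sym2 (Fin n) → Bool,
      (∀ f, OrdCopy H F f → (∀ u v, H.Adj u v → c s(f u, f v) = true) →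
        ¬ Set.range f ⊆ Set.range φ) ∧
      (∀ g, OrdCopy H' F g → (∀ u v, H'.Adj u v → c s(g u, g v) = false) →
        ¬ Set.range g ⊆ Set.range φ) := by
  obtain ⟨c', hc'⟩ := not_forall.mp h
  -- edges outside `range φ` get an arbitrary colour
  set c := Function.extend (Sym2.map φ) c' fun _ => true
  have hc (u v : Fin k) : c s(φ u, φ v) = c' s(u, v) := by
    rw [← Sym2.map_mk]
    exact (Sym2.map.injective hφ.injective).extend_apply _ _ _
  have hfactor {j} {G : SimpleGraph (Fin j)} {f : Fin j → Fin n} (hf : OrdCopy G F f)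
      (hrange : Set.range f ⊆ Set.range φ) :
      ∃ g, OrdCopy G (F.comap φ) g ∧ φ ∘ g = f := by
    choose g hg using fun u => hrange (Set.mem_range_self u)
    have hfg : φ ∘ g = f := funext hg
    refine ⟨g, ⟨fun u v huv => hφ.lt_iff_lt.mp ?_, fun u v huv => ?_⟩, hfg⟩
    · simpa only [hg] using hf.1 huv
    · simpa only [SimpleGraph.comap_adj, hg] using hf.2 u v huv
  refine ⟨c, fun f hf hred hrange => ?_, fun f hf hblue hrange => ?_⟩
  · obtain ⟨g, hg, rfl⟩ := hfactor hf hrange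
    exact hc' (.inl ⟨g, hg, fun u v huv => hc (g u) (g v) ▸ hred u v huv⟩)
  · obtain ⟨g, hg, rfl⟩ := hfactor hf hrange
    exact hc' (.inr ⟨g, hg, fun u v huv => hc (g u) (g v) ▸ hblue u v huv⟩)

lemma OrdArrows.exists_mono (h : OrdArrows F H H) (c : Sym2 (Fin n) → Bool) :
    ∃ f, OrdCopy H F f ∧ ∃ b, ∀ u v, H.Adj u v → c s(f u, f v) = b := by
  rcases h c with ⟨f, hf, hred⟩ | ⟨f, hf, hblue⟩
  exacts [⟨f, hf, true, hred⟩, ⟨f, hf, false, hblue⟩]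

lemma MinimalOrdRamsey.exists_coloring_mem_range {F : SimpleGraph (Fin (n + 1))}
    (hmin : MinimalOrdRamsey F H H) (v : Fin (n + 1)) :
    ∃ c : Sym2 (Fin (n + 1)) → Bool, ∀ f, OrdCopy H F f →
      (∃ b, ∀ u w, H.Adj u w → c s(f u, f w) = b) → v ∈ Set.range f := by
  have hdel : ¬ OrdArrows (F.comap v.succAbove) H H :=
    hmin.2 n _ ⟨v.succAbove, Fin.strictMono_succAbove v, fun _ _ h => h⟩
      fun h => (Nat.lt_succ_self n).not_ge h.card_le
  obtain ⟨c, hred, hblue⟩ :=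
    exists_coloring_of_not_ordArrows_comap (Fin.strictMono_succAbove v) hdel
  refine ⟨c, fun f hf ⟨b, hmono⟩ => not_not.mp fun hv => ?_⟩
  rw [← Set.subset_compl_singleton_iff, ← Fin.range_succAbove] at hv
  cases b
  exacts [hblue f hf hmono hv, hred f hf hmono hv]

lemma MinimalOrdRamsey.exists_strictMono_mem_range {F : SimpleGraph (Fin (n + 1))}
    (hmin : MinimalOrdRamsey F H H) (hF : OrdArrows F H' H') {f : Fin m → Fin m'}
    (hf : OrdCopy H H' f) (v : Fin (n + 1)) :
    ∃ g : Fin m' → Fin (n + 1), StrictMono g ∧ v ∈ Set.range (g ∘ f) := by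
  obtain ⟨c, hc⟩ := hmin.exists_coloring_mem_range v
  obtain ⟨g, hg, b, hmono⟩ := hF.exists_mono c
  exact ⟨g, hg.1, hc _ (hg.comp hf) ⟨b, fun u w h => hmono _ _ (hf.2 u w h)⟩⟩

end OrderedRamsey

/-- (1) If `F` is a minimal ordered Ramsey graph of `H`, then there is a coloring of `F`
such that every monochromatic ordered copy of `H` contains the leftmost vertex of `F`, and
likewise one for the rightmost vertex. (2) Consequently, if `H` and `H'` have the same set
of ordered Ramsey graphs and `H` is an ordered subgraph of `H'`, then every ordered copy of
`H` in `H'` contains both the leftmost and the rightmost vertex of `H'`. -/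
theorem stmt19 :
    (∀ (m n : ℕ) (H : SimpleGraph (Fin m)) (F : SimpleGraph (Fin n)) (hn : 0 < n),
      MinimalOrdRamsey F H H →
      ((∃ c : Sym2 (Fin n) → Bool, ∀ f : Fin m → Fin n, OrdCopy H F f →
          (∃ b, ∀ u v, H.Adj u v → c s(f u, f v) = b) → ∃ w, f w = ⟨0, hn⟩) ∧
       (∃ c : Sym2 (Fin n) → Bool, ∀ f : Fin m → Fin n, OrdCopy H F f →
          (∃ b, ∀ u v, H.Adj u v → c s(f u, f v) = b) →
            ∃ w, f w = ⟨n - 1, Nat.sub_lt hn Nat.one_pos⟩))) ∧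
    (∀ (m m' : ℕ) (H : SimpleGraph (Fin m)) (H' : SimpleGraph (Fin m')) (hm' : 0 < m'),
      (∀ (n : ℕ) (F : SimpleGraph (Fin n)), OrdArrows F H H ↔ OrdArrows F H' H') →
      (∃ φ, OrdCopy H H' φ) →
      ∀ f : Fin m → Fin m', OrdCopy H H' f →
        (∃ w, f w = ⟨0, hm'⟩) ∧ (∃ w, f w = ⟨m' - 1, Nat.sub_lt hm' Nat.one_pos⟩)) := by
  refine ⟨fun m n H F hn hmin => ?_, fun m m' H H' hm' hiff _ f hf => ?_⟩
  · obtain ⟨n, rfl⟩ := Nat.exists_eq_add_one_of_ne_zero hn.ne'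
    exact ⟨hmin.exists_coloring_mem_range 0, hmin.exists_coloring_mem_range (Fin.last n)⟩
  · obtain ⟨N, F₀, hF₀⟩ := exists_ordArrows H' H'
    obtain ⟨n, F, hmin⟩ := exists_minimalOrdRamsey ((hiff N F₀).mpr hF₀)
    have hF : OrdArrows F H' H' := (hiff n F).mp hmin.1
    obtain ⟨m', rfl⟩ := Nat.exists_eq_add_one_of_ne_zero hm'.ne'
    obtain ⟨n, rfl⟩ := Nat.exists_eq_add_one_of_ne_zero <|
      (hF.exists_mono fun _ => true).elim fun g _ => (g 0).pos.ne'
    obtain ⟨g, hg, w, hw⟩ := hmin.exists_strictMono_mem_range hF hf ⊥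
    obtain ⟨g', hg', w', hw'⟩ := hmin.exists_strictMono_mem_range hF hf ⊤
    exact ⟨⟨w, isMin_iff_eq_bot.mp (hg.isMin_of_apply (isMin_iff_eq_bot.mpr hw))⟩,
      ⟨w', isMax_iff_eq_top.mp (hg'.isMax_of_apply (isMax_iff_eq_top.mpr hw'))⟩⟩
end
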